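/- arXiv:1412.7437 — 2 statements merged into one kernel-verified Lean document; each statement's English description precedes it below -/
import Mathlib

section
/- (Complex Johnson–Lindenstrauss) Let Π = G/√(2d) ∈ C^{d×D} with G_{ij} = A_{ij} + iB_{ij}, A_{ij}, B_{ij} i.i.d. N(0,1). Let v_1,...,v_S ∈ C^D and ε ∈ (0,1). Then with probability at least 1 − 2S e^{−dε²/8}, for all i, ‖Πv_i‖₂ ∈ [(1−ε)‖v_i‖₂, (1+ε)‖v_i‖₂]. -/
/-!
Write `G = A + iB`. For a fixed vector `v` with `σ² = ‖v‖²`, the real and imaginary parts of each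
coordinate `(Gv)ᵢ` are real linear combinations of independent standard Gaussians, hence centred
Gaussians of variance `σ²`. Without using their (true) independence, AM–GM already gives
`E exp (t |(Gv)ᵢ|²) ≤ (E exp (2t Re²) + E exp (2t Im²)) / 2 = (1 - 4tσ²)^(-1/2)`.
Distinct rows use disjoint sets of entries, so `‖Gv‖² = ∑ᵢ |(Gv)ᵢ|²` has moment generating function
at most `(1 - 4tσ²)^(-d/2)`. Chernoff's bound at `t = (1 - a⁻²) / (4σ²)` then bounds the probability
that `‖Gv‖²` lies beyond `2dσ²a²` by `aᵈ exp (-d (a² - 1) / 2) ≤ exp (-d (a - 1)² / 2)`, for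
`a = 1 ± ε`. Since `‖Πv‖² = ‖Gv‖² / (2d)`, a union bound over the `S` vectors concludes.
-/

open MeasureTheory ProbabilityTheory Matrix
open Real
open scoped NNReal

/-- Euclidean norm on `ℂ^n`. -/
noncomputable def nrm {n : ℕ} (v : Fin n → ℂ) : ℝ := Real.sqrt (∑ i, ‖v i‖ ^ 2)

section

variable {Ω : Type*} [MeasurableSpace Ω] {μ : Measure Ω}

theorem ProbabilityTheory.iIndepFun.curry {ι κ 𝓧 : Type*} [MeasurableSpace 𝓧]
    {X : ι × κ → Ω → 𝓧} (mX : ∀ p, Measurable (X p)) (h : iIndepFun X μ) :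
    iIndepFun (fun i ω j => X (i, j) ω) μ := by
  have := h.isProbabilityMeasure
  have : ∀ p, IsProbabilityMeasure (μ.map (X p)) :=
    fun p => Measure.isProbabilityMeasure_map (mX p).aemeasurable
  rw [iIndepFun_iff_map_fun_eq_infinitePi_map (by fun_prop)]
  have hrow (i : ι) :
      μ.map (fun ω j => X (i, j) ω) = Measure.infinitePi fun j => μ.map (X (i, j)) :=
    (h.precomp (Prod.mk_right_injective i)).map_fun_eq_infinitePi_map fun j => mX _
  simp_rw [hrow]
  rw [← Measure.infinitePi_map_curry (fun i j => μ.map (X (i, j))),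
    ← h.map_fun_eq_infinitePi_map mX, Measure.map_map (by fun_prop) (by fun_prop)]
  rfl

lemma map_const_mul_eq_gaussianReal {X : Ω → ℝ} (hX : Measurable X) {m : ℝ} {v : ℝ≥0}
    (hXl : μ.map X = gaussianReal m v) (c : ℝ) :
    μ.map (fun ω => c * X ω) = gaussianReal (c * m) (‖c‖₊ ^ 2 * v) := by
  rw [← Function.comp_def (c * ·), ← Measure.map_map (measurable_const_mul c) hX, hXl,
    gaussianReal_map_const_mul]
  congr 2
  ext
  simp

lemma map_sum_mul_eq_gaussianReal {ι : Type*} {X : ι → Ω → ℝ} (hmeas : ∀ p, Measurable (X p))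
    (hindep : iIndepFun X μ) {m : ι → ℝ} {v : ι → ℝ≥0}
    (hX : ∀ p, μ.map (X p) = gaussianReal (m p) (v p)) (c : ι → ℝ) (s : Finset ι) :
    μ.map (fun ω => ∑ p ∈ s, c p * X p ω)
      = gaussianReal (∑ p ∈ s, c p * m p) (∑ p ∈ s, ‖c p‖₊ ^ 2 * v p) := by
  classical
  have := hindep.isProbabilityMeasure
  induction s using Finset.induction_on with
  | empty => simp [gaussianReal_zero_var]
  | insert q s hq ih =>
    have hindep' : IndepFun (fun ω => c q * X q ω) (∑ p ∈ s, fun ω => c p * X p ω) μ :=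
      ((hindep.comp (fun p x => c p * x) fun p => measurable_const_mul (c p))
        |>.indepFun_finsetSum_of_notMem (fun p => (hmeas p).const_mul (c p)) hq).symm
    have hsum : (∑ p ∈ s, fun ω => c p * X p ω) = fun ω => ∑ p ∈ s, c p * X p ω := by
      ext; simp
    rw [hsum] at hindep'
    simp only [Finset.sum_insert hq]
    exact gaussianReal_add_gaussianReal_of_indepFun hindep'
      (map_const_mul_eq_gaussianReal (hmeas q) (hX q) (c q)) ih

-- Both sides vanish when `1 - 2 s v ≤ 0`: the left one integrates a non-integrable function.
omit [MeasurableSpace Ω] in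
lemma integral_exp_mul_sq_gaussianReal (v : ℝ≥0) (s : ℝ) :
    ∫ x, rexp (s * x ^ 2) ∂gaussianReal 0 v = (√(1 - 2 * s * v))⁻¹ := by
  rcases eq_or_ne v 0 with rfl | hv
  · simp [gaussianReal_zero_var]
  rw [integral_gaussianReal_eq_integral_smul hv]
  have hv' : (0 : ℝ) < v := by positivity
  have hpdf (x : ℝ) : gaussianPDFReal 0 v x • rexp (s * x ^ 2)
      = (√(2 * π * v))⁻¹ * rexp (-((1 - 2 * s * v) / (2 * v)) * x ^ 2) := by
    rw [gaussianPDFReal, smul_eq_mul, mul_assoc, ← Real.exp_add]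
    congr 2
    field_simp
    ring
  simp_rw [hpdf]
  rw [integral_const_mul, integral_gaussian]
  rcases le_or_gt (1 - 2 * s * v) 0 with h | h
  · rw [Real.sqrt_eq_zero'.mpr h, Real.sqrt_eq_zero'.mpr (div_nonpos_of_nonneg_of_nonpos pi_pos.le
      (div_nonpos_of_nonpos_of_nonneg h (by positivity)))]
    simp
  rw [← Real.sqrt_inv, ← Real.sqrt_inv, ← Real.sqrt_mul (by positivity)]
  congr 1
  field_simp

lemma mgf_sq_of_map_eq_gaussianReal {X : Ω → ℝ} (hX : AEMeasurable X μ) {v : ℝ≥0}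
    (hXl : μ.map X = gaussianReal 0 v) (s : ℝ) :
    mgf (fun ω => X ω ^ 2) μ s = (√(1 - 2 * s * v))⁻¹ := by
  rw [mgf, ← integral_exp_mul_sq_gaussianReal, ← hXl, integral_map hX (by fun_prop)]

lemma integrable_exp_mul_sq_of_map_eq_gaussianReal {X : Ω → ℝ} (hX : AEMeasurable X μ)
    {v : ℝ≥0} (hXl : μ.map X = gaussianReal 0 v) {s : ℝ} (hs : 2 * s * v < 1) :
    Integrable (fun ω => rexp (s * X ω ^ 2)) μ := by
  refine Integrable.of_integral_ne_zero ?_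
  rw [← mgf, mgf_sq_of_map_eq_gaussianReal hX hXl]
  have : 0 < 1 - 2 * s * v := by linarith
  positivity

lemma exp_mul_add_le_half_add (t a b : ℝ) :
    rexp (t * (a + b)) ≤ (rexp (2 * t * a) + rexp (2 * t * b)) / 2 := by
  rw [mul_add, Real.exp_add, mul_assoc, mul_assoc, two_mul, two_mul, Real.exp_add, Real.exp_add]
  nlinarith [sq_nonneg (rexp (t * a) - rexp (t * b))]

section SumOfSquares

variable {X Y : Ω → ℝ} (hX : AEMeasurable X μ) (hY : AEMeasurable Y μ) {v : ℝ≥0}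
  (hXl : μ.map X = gaussianReal 0 v) (hYl : μ.map Y = gaussianReal 0 v) {t : ℝ}
  (ht : 4 * t * v < 1)
include hX hY hXl hYl ht

lemma integrable_exp_mul_sq_add_sq :
    Integrable (fun ω => rexp (t * (X ω ^ 2 + Y ω ^ 2))) μ := by
  have hs : 2 * (2 * t) * v < 1 := by linarith
  refine Integrable.mono' (((integrable_exp_mul_sq_of_map_eq_gaussianReal hX hXl hs).add
    (integrable_exp_mul_sq_of_map_eq_gaussianReal hY hYl hs)).div_const 2)
    (by fun_prop) (ae_of_all _ fun ω => ?_)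
  rw [Real.norm_of_nonneg (Real.exp_pos _).le]
  exact exp_mul_add_le_half_add t _ _

lemma mgf_sq_add_sq_le :
    mgf (fun ω => X ω ^ 2 + Y ω ^ 2) μ t ≤ (√(1 - 4 * t * v))⁻¹ := by
  have hs : 2 * (2 * t) * v < 1 := by linarith
  have hXi := integrable_exp_mul_sq_of_map_eq_gaussianReal hX hXl hs
  have hYi := integrable_exp_mul_sq_of_map_eq_gaussianReal hY hYl hs
  calc mgf (fun ω => X ω ^ 2 + Y ω ^ 2) μ t
      ≤ ∫ ω, (rexp (2 * t * X ω ^ 2) + rexp (2 * t * Y ω ^ 2)) / 2 ∂μ :=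
        integral_mono (integrable_exp_mul_sq_add_sq hX hY hXl hYl ht) ((hXi.add hYi).div_const 2)
          fun ω => exp_mul_add_le_half_add t _ _
    _ = (mgf (fun ω => X ω ^ 2) μ (2 * t) + mgf (fun ω => Y ω ^ 2) μ (2 * t)) / 2 := by
        rw [integral_div, integral_add hXi hYi, mgf, mgf]
    _ = (√(1 - 4 * t * v))⁻¹ := by
        rw [mgf_sq_of_map_eq_gaussianReal hX hXl, mgf_sq_of_map_eq_gaussianReal hY hYl]
        ring_nf

end SumOfSquares

lemma pow_mul_exp_le_exp {a : ℝ} (ha : 0 ≤ a) (d : ℕ) :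
    a ^ d * rexp (-(d * (a ^ 2 - 1)) / 2) ≤ rexp (-(d * (a - 1) ^ 2) / 2) := by
  calc a ^ d * rexp (-(d * (a ^ 2 - 1)) / 2)
      ≤ rexp (a - 1) ^ d * rexp (-(d * (a ^ 2 - 1)) / 2) := by
        gcongr
        linarith [Real.add_one_le_exp (a - 1)]
    _ = rexp (-(d * (a - 1) ^ 2) / 2) := by
        rw [← Real.exp_nat_mul, ← Real.exp_add]
        ring_nf

-- Chosen so that `(1 - 4 t v)^(-1/2) = a`.
noncomputable def chernoffParam (v a : ℝ) : ℝ := (1 - (a ^ 2)⁻¹) / (4 * v)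

section Chernoff

variable {Q : Ω → ℝ} {d : ℕ} {v : ℝ} (hv : 0 < v)

include hv in
lemma four_mul_chernoffParam_mul_lt_one {a : ℝ} (ha : 0 < a) : 4 * chernoffParam v a * v < 1 := by
  have : 0 < (a ^ 2)⁻¹ := by positivity
  rw [chernoffParam]
  field_simp
  linarith

variable (hmgf : ∀ t, 4 * t * v < 1 → mgf Q μ t ≤ (√(1 - 4 * t * v))⁻¹ ^ d)
include hv hmgf

lemma exp_mul_mgf_chernoffParam_le {a : ℝ} (ha : 0 < a) :
    rexp (-chernoffParam v a * (2 * d * v * a ^ 2)) * mgf Q μ (chernoffParam v a)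
      ≤ rexp (-(d * (a - 1) ^ 2) / 2) := by
  have h4t : 1 - 4 * chernoffParam v a * v = (a ^ 2)⁻¹ := by
    rw [chernoffParam]; field_simp; ring
  have hexp : -chernoffParam v a * (2 * d * v * a ^ 2) = -(d * (a ^ 2 - 1)) / 2 := by
    rw [chernoffParam]; field_simp; ring
  have hmgf_le : mgf Q μ (chernoffParam v a) ≤ a ^ d := by
    have := hmgf _ (four_mul_chernoffParam_mul_lt_one hv ha)
    rwa [h4t, Real.sqrt_inv, Real.sqrt_sq ha.le, inv_inv] at this
  calc rexp (-chernoffParam v a * (2 * d * v * a ^ 2)) * mgf Q μ (chernoffParam v a)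
      ≤ rexp (-(d * (a ^ 2 - 1)) / 2) * a ^ d := by
        rw [hexp]; gcongr
    _ ≤ rexp (-(d * (a - 1) ^ 2) / 2) := by
        rw [mul_comm]; exact pow_mul_exp_le_exp ha.le d

variable (hint : ∀ t, 4 * t * v < 1 → Integrable (fun ω => rexp (t * Q ω)) μ) [IsFiniteMeasure μ]
include hint

lemma measureReal_le_le_exp {a : ℝ} (ha0 : 0 < a) (ha1 : a ≤ 1) :
    μ.real {ω | Q ω ≤ 2 * d * v * a ^ 2} ≤ rexp (-(d * (a - 1) ^ 2) / 2) := by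
  have ht : chernoffParam v a ≤ 0 := by
    have : 1 ≤ (a ^ 2)⁻¹ := one_le_inv_iff₀.mpr ⟨by positivity, pow_le_one₀ ha0.le ha1⟩
    exact div_nonpos_of_nonpos_of_nonneg (by linarith) (by positivity)
  exact (measure_le_le_exp_mul_mgf _ ht (hint _ (four_mul_chernoffParam_mul_lt_one hv ha0))).trans
    (exp_mul_mgf_chernoffParam_le hv hmgf ha0)

lemma measureReal_ge_le_exp {a : ℝ} (ha : 1 ≤ a) :
    μ.real {ω | 2 * d * v * a ^ 2 ≤ Q ω} ≤ rexp (-(d * (a - 1) ^ 2) / 2) := by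
  have ha0 : 0 < a := by linarith
  have ht : 0 ≤ chernoffParam v a := by
    have : (a ^ 2)⁻¹ ≤ 1 := inv_le_one_of_one_le₀ (one_le_pow₀ ha)
    exact div_nonneg (by linarith) (by positivity)
  exact (measure_ge_le_exp_mul_mgf _ ht (hint _ (four_mul_chernoffParam_mul_lt_one hv ha0))).trans
    (exp_mul_mgf_chernoffParam_le hv hmgf ha0)

lemma measure_two_sided_tail_le {ε : ℝ} (hε0 : 0 < ε) (hε1 : ε < 1) :
    μ ({ω | Q ω ≤ 2 * d * v * (1 - ε) ^ 2} ∪ {ω | 2 * d * v * (1 + ε) ^ 2 ≤ Q ω})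
      ≤ ENNReal.ofReal (2 * rexp (-(d * ε ^ 2) / 2)) := by
  have hlow := measureReal_le_le_exp hv hmgf hint (a := 1 - ε) (by linarith) (by linarith)
  have hup := measureReal_ge_le_exp hv hmgf hint (a := 1 + ε) (by linarith)
  simp only [sub_sub_cancel_left, neg_sq, add_sub_cancel_left] at hlow hup
  calc _ ≤ μ {ω | Q ω ≤ 2 * d * v * (1 - ε) ^ 2} + μ {ω | 2 * d * v * (1 + ε) ^ 2 ≤ Q ω} :=
        measure_union_le _ _
    _ ≤ ENNReal.ofReal (rexp (-(d * ε ^ 2) / 2)) + ENNReal.ofReal (rexp (-(d * ε ^ 2) / 2)) := by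
        rw [← ofReal_measureReal, ← ofReal_measureReal]
        gcongr
    _ = ENNReal.ofReal (2 * rexp (-(d * ε ^ 2) / 2)) := by
        rw [← ENNReal.ofReal_add (by positivity) (by positivity), two_mul]

end Chernoff

lemma ofReal_one_sub_le_measure_forall [IsProbabilityMeasure μ] {ι : Type*} [Fintype ι]
    {p : ι → Ω → Prop} {δ : ℝ} (hδ : 0 ≤ δ) (h : ∀ k, μ {ω | ¬ p k ω} ≤ ENNReal.ofReal δ) :
    ENNReal.ofReal (1 - Fintype.card ι * δ) ≤ μ {ω | ∀ k, p k ω} := by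
  have hcompl : {ω | ∀ k, p k ω}ᶜ = ⋃ k, {ω | ¬ p k ω} := by ext; simp
  have hbad : μ {ω | ∀ k, p k ω}ᶜ ≤ ENNReal.ofReal (Fintype.card ι * δ) := by
    calc μ {ω | ∀ k, p k ω}ᶜ ≤ ∑ k, μ {ω | ¬ p k ω} := hcompl ▸ measure_iUnion_fintype_le μ _
      _ ≤ ∑ _k : ι, ENNReal.ofReal δ := Finset.sum_le_sum fun k _ => h k
      _ = ENNReal.ofReal (Fintype.card ι * δ) := by
        rw [Finset.sum_const, Finset.card_univ, nsmul_eq_mul, ENNReal.ofReal_mul (by positivity),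
          ENNReal.ofReal_natCast]
  calc ENNReal.ofReal (1 - Fintype.card ι * δ) = 1 - ENNReal.ofReal (Fintype.card ι * δ) := by
        rw [ENNReal.ofReal_sub _ (by positivity), ENNReal.ofReal_one]
    _ ≤ 1 - μ {ω | ∀ k, p k ω}ᶜ := tsub_le_tsub_left hbad 1
    _ ≤ μ {ω | ∀ k, p k ω} := by
        rw [tsub_le_iff_right, ← measure_univ (μ := μ)]
        exact measure_univ_le_add_compl _

section ComplexGaussian

variable {m n : Type*} [Fintype n]

lemma map_re_sum_mul_eq_gaussianReal {Y : n × Bool → Ω → ℝ} (hmeas : ∀ q, Measurable (Y q))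
    (hindep : iIndepFun Y μ) (hgauss : ∀ q, μ.map (Y q) = gaussianReal 0 1) (u : n → ℂ) :
    μ.map (fun ω => (∑ j, ((Y (j, true) ω : ℂ) + Y (j, false) ω * Complex.I) * u j).re)
      = gaussianReal 0 (∑ j, ‖u j‖₊ ^ 2) := by
  let c : n × Bool → ℝ := fun q => if q.2 then (u q.1).re else -(u q.1).im
  have hre (ω : Ω) : (∑ j, ((Y (j, true) ω : ℂ) + Y (j, false) ω * Complex.I) * u j).re
      = ∑ q, c q * Y q ω := by
    simp only [Complex.re_sum, Fintype.sum_prod_type, Fintype.sum_bool, c]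
    refine Finset.sum_congr rfl fun j _ => ?_
    simp [Complex.mul_re]
    ring
  have hvar : ∑ q, ‖c q‖₊ ^ 2 * 1 = ∑ j, ‖u j‖₊ ^ 2 := by
    rw [Fintype.sum_prod_type]
    refine Finset.sum_congr rfl fun j _ => ?_
    ext
    simp [c, sq, Complex.norm_mul_self_eq_normSq, Complex.normSq_apply]
  simp_rw [hre]
  rw [map_sum_mul_eq_gaussianReal hmeas hindep hgauss c, hvar]
  simp

lemma map_im_sum_mul_eq_gaussianReal {Y : n × Bool → Ω → ℝ} (hmeas : ∀ q, Measurable (Y q))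
    (hindep : iIndepFun Y μ) (hgauss : ∀ q, μ.map (Y q) = gaussianReal 0 1) (u : n → ℂ) :
    μ.map (fun ω => (∑ j, ((Y (j, true) ω : ℂ) + Y (j, false) ω * Complex.I) * u j).im)
      = gaussianReal 0 (∑ j, ‖u j‖₊ ^ 2) := by
  have him (ω : Ω) : (∑ j, ((Y (j, true) ω : ℂ) + Y (j, false) ω * Complex.I) * u j).im
      = (∑ j, ((Y (j, true) ω : ℂ) + Y (j, false) ω * Complex.I) * (-Complex.I * u j)).re := by
    simp only [Complex.re_sum, Complex.im_sum]
    refine Finset.sum_congr rfl fun j _ => ?_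
    simp [Complex.mul_re, Complex.mul_im]
    ring
  simp_rw [him]
  rw [map_re_sum_mul_eq_gaussianReal hmeas hindep hgauss]
  simp

noncomputable def reImMatrix (g : (m × n) × Bool → Ω → ℝ) (ω : Ω) : Matrix m n ℂ :=
  Matrix.of fun i j => (g ((i, j), true) ω : ℂ) + g ((i, j), false) ω * Complex.I

omit [MeasurableSpace Ω] in
lemma reImMatrix_mulVec_apply (g : (m × n) × Bool → Ω → ℝ) (ω : Ω) (u : n → ℂ) (i : m) :
    (reImMatrix g ω *ᵥ u) i
      = ∑ j, ((g ((i, j), true) ω : ℂ) + g ((i, j), false) ω * Complex.I) * u j :=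
  rfl

lemma measurable_sq_norm_sum_mul (u : n → ℂ) :
    Measurable fun r : n × Bool → ℝ =>
      ‖∑ j, ((r (j, true) : ℂ) + r (j, false) * Complex.I) * u j‖ ^ 2 := by
  fun_prop

variable {g : (m × n) × Bool → Ω → ℝ} (hmeas : ∀ p, Measurable (g p)) (hindep : iIndepFun g μ)
include hmeas hindep

lemma iIndepFun_sq_norm_reImMatrix_mulVec (u : n → ℂ) :
    iIndepFun (fun i ω => ‖(reImMatrix g ω *ᵥ u) i‖ ^ 2) μ :=
  (hindep.precomp (Equiv.prodAssoc m n Bool).symm.injective |>.curry fun _ => hmeas _).comp _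
    fun _ => measurable_sq_norm_sum_mul u

variable (hgauss : ∀ p, μ.map (g p) = gaussianReal 0 1)
include hgauss

lemma mgf_sq_norm_reImMatrix_mulVec_le (u : n → ℂ) (i : m) {t : ℝ}
    (ht : 4 * t * ∑ j, ‖u j‖ ^ 2 < 1) :
    Integrable (fun ω => rexp (t * ‖(reImMatrix g ω *ᵥ u) i‖ ^ 2)) μ ∧
    mgf (fun ω => ‖(reImMatrix g ω *ᵥ u) i‖ ^ 2) μ t ≤ (√(1 - 4 * t * ∑ j, ‖u j‖ ^ 2))⁻¹ := by
  have hrow : iIndepFun (fun q : n × Bool => g ((i, q.1), q.2)) μ :=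
    hindep.precomp fun q q' h => by simpa [Prod.ext_iff] using h
  have hsq (ω : Ω) : ‖(reImMatrix g ω *ᵥ u) i‖ ^ 2
      = ((reImMatrix g ω *ᵥ u) i).re ^ 2 + ((reImMatrix g ω *ᵥ u) i).im ^ 2 := by
    rw [Complex.sq_norm, Complex.normSq_apply]; ring
  have hv : ((∑ j, ‖u j‖₊ ^ 2 : ℝ≥0) : ℝ) = ∑ j, ‖u j‖ ^ 2 := by push_cast; rfl
  simp_rw [hsq]
  rw [← hv] at ht ⊢
  have hre := map_re_sum_mul_eq_gaussianReal (fun _ => hmeas _) hrow (fun _ => hgauss _) u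
  have him := map_im_sum_mul_eq_gaussianReal (fun _ => hmeas _) hrow (fun _ => hgauss _) u
  have hmre : AEMeasurable (fun ω => ((reImMatrix g ω *ᵥ u) i).re) μ := by
    simp only [reImMatrix_mulVec_apply]; fun_prop
  have hmim : AEMeasurable (fun ω => ((reImMatrix g ω *ᵥ u) i).im) μ := by
    simp only [reImMatrix_mulVec_apply]; fun_prop
  exact ⟨integrable_exp_mul_sq_add_sq hmre hmim hre him ht, mgf_sq_add_sq_le hmre hmim hre him ht⟩

lemma mgf_sum_sq_norm_reImMatrix_mulVec_le [Fintype m] (u : n → ℂ) {t : ℝ}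
    (ht : 4 * t * ∑ j, ‖u j‖ ^ 2 < 1) :
    Integrable (fun ω => rexp (t * ∑ i, ‖(reImMatrix g ω *ᵥ u) i‖ ^ 2)) μ ∧
    mgf (fun ω => ∑ i, ‖(reImMatrix g ω *ᵥ u) i‖ ^ 2) μ t
      ≤ (√(1 - 4 * t * ∑ j, ‖u j‖ ^ 2))⁻¹ ^ Fintype.card m := by
  have := hindep.isProbabilityMeasure
  have hrows := iIndepFun_sq_norm_reImMatrix_mulVec hmeas hindep u
  have hmeas_rows (i : m) : Measurable fun ω => ‖(reImMatrix g ω *ᵥ u) i‖ ^ 2 := by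
    simp only [reImMatrix_mulVec_apply]; fun_prop
  have hsum : (fun ω => ∑ i, ‖(reImMatrix g ω *ᵥ u) i‖ ^ 2)
      = ∑ i, fun ω => ‖(reImMatrix g ω *ᵥ u) i‖ ^ 2 := by
    ext; simp
  have hrow i := mgf_sq_norm_reImMatrix_mulVec_le hmeas hindep hgauss u i ht
  refine ⟨by simpa only [Finset.sum_apply] using
    hrows.integrable_exp_mul_sum hmeas_rows (s := .univ) fun i _ => (hrow i).1, ?_⟩
  rw [hsum, hrows.mgf_sum hmeas_rows, ← Finset.card_univ, ← Finset.prod_const]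
  exact Finset.prod_le_prod (fun i _ => mgf_nonneg) fun i _ => (hrow i).2

end ComplexGaussian

omit [MeasurableSpace Ω] in
lemma nrm_mulVec_eq_sqrt {d D : ℕ} {g : (Fin d × Fin D) × Bool → Ω → ℝ}
    {P : Ω → Matrix (Fin d) (Fin D) ℂ}
    (hP : ∀ ω i j, P ω i j =
      ((g ((i, j), true) ω : ℂ) + (g ((i, j), false) ω : ℂ) * Complex.I) /
        (Real.sqrt (2 * d) : ℂ)) (ω : Ω) (v : Fin D → ℂ) :
    nrm (P ω *ᵥ v) = √((∑ i, ‖(reImMatrix g ω *ᵥ v) i‖ ^ 2) / (2 * d)) := by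
  have hPω : P ω = ((√(2 * d) : ℝ) : ℂ)⁻¹ • reImMatrix g ω := by
    ext i j
    simp [hP, reImMatrix, div_eq_inv_mul]
  rw [nrm, hPω, smul_mulVec, Finset.sum_div]
  congr 1
  refine Finset.sum_congr rfl fun i _ => ?_
  rw [Pi.smul_apply, norm_smul, mul_pow, norm_inv, Complex.norm_real, Real.norm_eq_abs, inv_pow,
    sq_abs, Real.sq_sqrt (by positivity), inv_mul_eq_div]

lemma measure_nrm_mulVec_not_mem_band_le {d D : ℕ} (hd : 0 < d)
    {g : (Fin d × Fin D) × Bool → Ω → ℝ} (hmeas : ∀ p, Measurable (g p))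
    (hindep : iIndepFun g μ) (hgauss : ∀ p, μ.map (g p) = gaussianReal 0 1)
    {P : Ω → Matrix (Fin d) (Fin D) ℂ}
    (hP : ∀ ω i j, P ω i j =
      ((g ((i, j), true) ω : ℂ) + (g ((i, j), false) ω : ℂ) * Complex.I) /
        (Real.sqrt (2 * d) : ℂ)) (v : Fin D → ℂ) {ε : ℝ} (hε0 : 0 < ε) (hε1 : ε < 1) :
    μ {ω | ¬ ((1 - ε) * nrm v ≤ nrm (P ω *ᵥ v) ∧ nrm (P ω *ᵥ v) ≤ (1 + ε) * nrm v)}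
      ≤ ENNReal.ofReal (2 * rexp (-(d * ε ^ 2) / 2)) := by
  rcases eq_or_ne v 0 with rfl | hv
  · simp [nrm]
  have := hindep.isProbabilityMeasure
  set σ := ∑ j, ‖v j‖ ^ 2
  have hσ : 0 < σ := by
    obtain ⟨j, hj⟩ := Function.ne_iff.mp hv
    exact Finset.sum_pos' (fun _ _ => by positivity) ⟨j, Finset.mem_univ _, by positivity⟩
  have hmgf t (ht : 4 * t * σ < 1) := Fintype.card_fin d ▸
    mgf_sum_sq_norm_reImMatrix_mulVec_le hmeas hindep hgauss v ht
  refine (measure_mono fun ω hω => ?_).trans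
    (measure_two_sided_tail_le hσ (fun t ht => (hmgf t ht).2) (fun t ht => (hmgf t ht).1) hε0 hε1)
  have hd' : (0 : ℝ) < 2 * d := by positivity
  by_contra hQ
  simp only [Set.mem_union, Set.mem_ofPred_eq, not_or, not_le] at hQ
  apply hω
  have hnrm : nrm v = √σ := rfl
  rw [nrm_mulVec_eq_sqrt hP, hnrm, Real.le_sqrt (mul_nonneg (by linarith) (sqrt_nonneg _))
    (by positivity), Real.sqrt_le_iff, mul_pow, mul_pow, Real.sq_sqrt hσ.le, le_div_iff₀ hd',
    div_le_iff₀ hd']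
  exact ⟨by nlinarith, mul_nonneg (by linarith) (sqrt_nonneg _), by nlinarith⟩

end

/-- Complex Johnson–Lindenstrauss: for `Π = G/√(2d)` with i.i.d. standard complex
Gaussian entries and vectors `v 1, …, v S` in `ℂ^D`, with probability at least
`1 − 2 S e^{−d ε²/8}` all lengths `‖Π v i‖` lie within `[(1−ε)‖v i‖, (1+ε)‖v i‖]`. -/
theorem complex_johnson_lindenstrauss
    {Ω : Type*} [MeasurableSpace Ω] (μ : Measure Ω) [IsProbabilityMeasure μ]
    (d D S : ℕ) (hd : 0 < d)
    (g : (Fin d × Fin D) × Bool → Ω → ℝ)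
    (hmeas : ∀ p, Measurable (g p))
    (hindep : iIndepFun g μ)
    (hgauss : ∀ p, μ.map (g p) = gaussianReal 0 1)
    (P : Ω → Matrix (Fin d) (Fin D) ℂ)
    (hP : ∀ ω i j, P ω i j =
      ((g ((i, j), true) ω : ℂ) + (g ((i, j), false) ω : ℂ) * Complex.I) /
        (Real.sqrt (2 * d) : ℂ))
    (v : Fin S → (Fin D → ℂ)) (ε : ℝ) (hε0 : 0 < ε) (hε1 : ε < 1) :
    ENNReal.ofReal (1 - 2 * S * Real.exp (-(d * ε ^ 2) / 8)) ≤
      μ {ω | ∀ i, (1 - ε) * nrm (v i) ≤ nrm ((P ω).mulVec (v i)) ∧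
                  nrm ((P ω).mulVec (v i)) ≤ (1 + ε) * nrm (v i)} := by
  have hband k := measure_nrm_mulVec_not_mem_band_le hd hmeas hindep hgauss hP (v k) hε0 hε1
  have hexp : rexp (-(d * ε ^ 2) / 2) ≤ rexp (-(d * ε ^ 2) / 8) := by
    have : 0 ≤ (d : ℝ) * ε ^ 2 := by positivity
    exact Real.exp_le_exp.mpr (by linarith)
  calc ENNReal.ofReal (1 - 2 * S * rexp (-(d * ε ^ 2) / 8))
      ≤ ENNReal.ofReal (1 - Fintype.card (Fin S) * (2 * rexp (-(d * ε ^ 2) / 2))) := by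
        rw [Fintype.card_fin, ← mul_assoc, mul_comm (S : ℝ) 2]
        gcongr
    _ ≤ _ := ofReal_one_sub_le_measure_forall (by positivity) hband
end

section
/- Let Π ∈ C^{d×D} be an ε-JL matrix for a common set of unit eigenvectors of psd matrices M_i = Σ_a λ^i_a |ψ^i_a⟩⟨ψ^i_a| (i ∈ [J], λ^i_a ≥ 0). Then for M'_i := Π M_i Π†, and all i,j, |tr(M'_i M'_j) − tr(M_i M_j)| ≤ 192 ε ‖M_i‖₁ ‖M_j‖₁. -/
open Matrix
open scoped ComplexOrder

/-- `A` has the ε-JL property for the vector `w`. -/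
def JLprop {d D : ℕ} (A : Matrix (Fin d) (Fin D) ℂ) (ε : ℝ) (w : Fin D → ℂ) : Prop :=
  (1 - ε) * nrm w ≤ nrm (A.mulVec w) ∧ nrm (A.mulVec w) ≤ (1 + ε) * nrm w

/-!
Each `M i` is a nonnegative combination of rank-one projectors, so
`tr (M i * M j) = ∑ a b, λ i a * λ j b * ‖⟪ψ i a, ψ j b⟫‖²`, and compressing by `A` only replaces
every `ψ` by `A ψ`. By polarization, `⟪u, v⟫` is a combination of the squared norms of
`u ± v` and `u ± I • v`, each of which `A` distorts by a relative error of at most `3 ε`; for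
unit `u, v` this moves `⟪u, v⟫` by at most `6 ε` and its squared modulus by at most `48 ε ≤ 192 ε`.
Summing with the weights `λ i a * λ j b` gives the bound.
-/

open WithLp
open scoped InnerProductSpace

lemma abs_sq_sub_sq_le_of_mul_le_of_le_mul {x y ε : ℝ} (hx : 0 ≤ x) (hε : ε ≤ 1)
    (hlo : (1 - ε) * x ≤ y) (hhi : y ≤ (1 + ε) * x) :
    |y ^ 2 - x ^ 2| ≤ 3 * ε * x ^ 2 := by
  have hεx : 0 ≤ ε * x := by linarith
  rw [abs_le]
  constructor <;> nlinarith [mul_nonneg hεx hx]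

lemma abs_norm_sq_sub_norm_sq_le {E : Type*} [SeminormedAddCommGroup E] (a b : E) :
    |‖a‖ ^ 2 - ‖b‖ ^ 2| ≤ ‖a - b‖ * (‖a - b‖ + 2 * ‖b‖) := by
  have hdiff := abs_norm_sub_norm_le a b
  have hsum : ‖a‖ + ‖b‖ ≤ ‖a - b‖ + 2 * ‖b‖ := by linarith [norm_le_norm_sub_add a b]
  calc |‖a‖ ^ 2 - ‖b‖ ^ 2| = |‖a‖ - ‖b‖| * (‖a‖ + ‖b‖) := by
        rw [sq_sub_sq, abs_mul, abs_of_nonneg (by positivity : 0 ≤ ‖a‖ + ‖b‖), mul_comm]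
    _ ≤ ‖a - b‖ * (‖a - b‖ + 2 * ‖b‖) := mul_le_mul hdiff hsum (by positivity) (norm_nonneg _)

section Polarization

variable {E F : Type*} [NormedAddCommGroup E] [InnerProductSpace ℂ E]
  [NormedAddCommGroup F] [InnerProductSpace ℂ F] (T : E →ₗ[ℂ] F) {x y : E} {δ : ℝ}

lemma abs_re_inner_map_map_sub_le
    (hadd : |‖T (x + y)‖ ^ 2 - ‖x + y‖ ^ 2| ≤ δ * ‖x + y‖ ^ 2)
    (hsub : |‖T (x - y)‖ ^ 2 - ‖x - y‖ ^ 2| ≤ δ * ‖x - y‖ ^ 2) :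
    |(⟪T x, T y⟫_ℂ).re - (⟪x, y⟫_ℂ).re| ≤ δ * (‖x‖ ^ 2 + ‖y‖ ^ 2) / 2 := by
  have hpar : δ * ‖x + y‖ ^ 2 + δ * ‖x - y‖ ^ 2 = 2 * δ * (‖x‖ ^ 2 + ‖y‖ ^ 2) := by
    rw [← mul_add, parallelogram_law_with_norm ℂ x y]; ring
  rw [map_add] at hadd
  rw [map_sub] at hsub
  have hTxy : (⟪T x, T y⟫_ℂ).re = (‖T x + T y‖ ^ 2 - ‖T x - T y‖ ^ 2) / 4 := by
    simpa only [sq, RCLike.re_to_complex] using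
      re_inner_eq_norm_add_mul_self_sub_norm_sub_mul_self_div_four (𝕜 := ℂ) (T x) (T y)
  have hxy : (⟪x, y⟫_ℂ).re = (‖x + y‖ ^ 2 - ‖x - y‖ ^ 2) / 4 := by
    simpa only [sq, RCLike.re_to_complex] using
      re_inner_eq_norm_add_mul_self_sub_norm_sub_mul_self_div_four (𝕜 := ℂ) x y
  rw [hTxy, hxy, abs_le]
  rw [abs_le] at hadd hsub
  constructor <;> linarith [hadd.1, hadd.2, hsub.1, hsub.2]

lemma norm_inner_map_map_sub_le
    (hadd : |‖T (x + y)‖ ^ 2 - ‖x + y‖ ^ 2| ≤ δ * ‖x + y‖ ^ 2)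
    (hsub : |‖T (x - y)‖ ^ 2 - ‖x - y‖ ^ 2| ≤ δ * ‖x - y‖ ^ 2)
    (hIadd : |‖T (x + Complex.I • y)‖ ^ 2 - ‖x + Complex.I • y‖ ^ 2|
      ≤ δ * ‖x + Complex.I • y‖ ^ 2)
    (hIsub : |‖T (x - Complex.I • y)‖ ^ 2 - ‖x - Complex.I • y‖ ^ 2|
      ≤ δ * ‖x - Complex.I • y‖ ^ 2) :
    ‖⟪T x, T y⟫_ℂ - ⟪x, y⟫_ℂ‖ ≤ δ * (‖x‖ ^ 2 + ‖y‖ ^ 2) := by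
  have hre := abs_re_inner_map_map_sub_le T hadd hsub
  -- `im ⟪x, y⟫ = -re ⟪x, I • y⟫`
  have him := abs_re_inner_map_map_sub_le T hIadd hIsub
  simp only [map_smul, inner_smul_right, Complex.I_mul_re, norm_smul, Complex.norm_I,
    one_mul] at him
  calc ‖⟪T x, T y⟫_ℂ - ⟪x, y⟫_ℂ‖
      ≤ |(⟪T x, T y⟫_ℂ).re - (⟪x, y⟫_ℂ).re| + |(⟪T x, T y⟫_ℂ).im - (⟪x, y⟫_ℂ).im| := by
        simpa only [Complex.sub_re, Complex.sub_im] using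
          Complex.norm_le_abs_re_add_abs_im (⟪T x, T y⟫_ℂ - ⟪x, y⟫_ℂ)
    _ ≤ δ * (‖x‖ ^ 2 + ‖y‖ ^ 2) := by
        rw [neg_sub_neg, abs_sub_comm] at him
        linarith

end Polarization

lemma nrm_eq_norm_toLp {n : ℕ} (v : Fin n → ℂ) : nrm v = ‖toLp 2 v‖ := by
  rw [EuclideanSpace.norm_eq]; rfl

lemma JLprop.abs_norm_sq_sub_le {d D : ℕ} {A : Matrix (Fin d) (Fin D) ℂ} {ε : ℝ}
    {w : Fin D → ℂ} (h : JLprop A ε w) (hε : ε ≤ 1) :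
    |‖toEuclideanLin A (toLp 2 w)‖ ^ 2 - ‖toLp 2 w‖ ^ 2| ≤ 3 * ε * ‖toLp 2 w‖ ^ 2 := by
  rw [JLprop, nrm_eq_norm_toLp, nrm_eq_norm_toLp] at h
  exact abs_sq_sub_sq_le_of_mul_le_of_le_mul (norm_nonneg _) hε h.1 h.2

lemma abs_norm_inner_mulVec_sq_sub_le_of_JLprop {d D : ℕ} {A : Matrix (Fin d) (Fin D) ℂ}
    {ε : ℝ} {u v : Fin D → ℂ} (hε : ε ≤ 1) (hu : nrm u = 1) (hv : nrm v = 1)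
    (hadd : JLprop A ε (u + v)) (hsub : JLprop A ε (u - v))
    (hIadd : JLprop A ε (u + Complex.I • v)) (hIsub : JLprop A ε (u - Complex.I • v)) :
    |‖⟪toLp 2 (A *ᵥ u), toLp 2 (A *ᵥ v)⟫_ℂ‖ ^ 2 - ‖⟪toLp 2 u, toLp 2 v⟫_ℂ‖ ^ 2| ≤ 192 * ε := by
  rw [nrm_eq_norm_toLp] at hu hv
  have hpol : ‖⟪toLp 2 (A *ᵥ u), toLp 2 (A *ᵥ v)⟫_ℂ - ⟪toLp 2 u, toLp 2 v⟫_ℂ‖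
      ≤ 3 * ε * (‖toLp 2 u‖ ^ 2 + ‖toLp 2 v‖ ^ 2) :=
    norm_inner_map_map_sub_le (toEuclideanLin A) (hadd.abs_norm_sq_sub_le hε)
      (hsub.abs_norm_sq_sub_le hε) (hIadd.abs_norm_sq_sub_le hε) (hIsub.abs_norm_sq_sub_le hε)
  have hinner : ‖⟪toLp 2 u, toLp 2 v⟫_ℂ‖ ≤ 1 := by
    simpa [hu, hv] using norm_inner_le_norm (𝕜 := ℂ) (toLp 2 u) (toLp 2 v)
  rw [hu, hv] at hpol
  refine (abs_norm_sq_sub_norm_sq_le _ _).trans ?_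
  nlinarith [norm_nonneg (⟪toLp 2 (A *ᵥ u), toLp 2 (A *ᵥ v)⟫_ℂ - ⟪toLp 2 u, toLp 2 v⟫_ℂ)]

section RankOneSum

variable {𝕜 ι l n : Type*} [RCLike 𝕜] [Fintype ι] [Fintype n]

def rankOneSum (c : ι → ℝ) (f : ι → n → 𝕜) : Matrix n n 𝕜 :=
  ∑ a, (c a : 𝕜) • vecMulVec (f a) (star (f a))

lemma mul_rankOneSum_mul_conjTranspose (A : Matrix l n 𝕜) (c : ι → ℝ) (f : ι → n → 𝕜) :
    A * rankOneSum c f * Aᴴ = rankOneSum c (fun a => A *ᵥ f a) := by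
  simp only [rankOneSum, Matrix.mul_sum, Matrix.sum_mul, Matrix.mul_smul, Matrix.smul_mul,
    mul_vecMulVec, vecMulVec_mul, star_mulVec]

lemma trace_vecMulVec_star_mul_vecMulVec_star (u w : n → 𝕜) :
    (vecMulVec u (star u) * vecMulVec w (star w)).trace = (‖⟪toLp 2 u, toLp 2 w⟫_𝕜‖ ^ 2 : ℝ) := by
  rw [vecMulVec_mul_vecMulVec, EuclideanSpace.inner_toLp_toLp, RCLike.ofReal_pow,
    ← RCLike.mul_conj]
  change u ⬝ᵥ ((star u ⬝ᵥ w) • star w) = _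
  rw [dotProduct_smul, smul_eq_mul, dotProduct_comm (star u), dotProduct_star u w, RCLike.star_def]

lemma re_trace_rankOneSum_mul_rankOneSum {κ : Type*} [Fintype κ] (c : ι → ℝ) (f : ι → n → 𝕜)
    (e : κ → ℝ) (g : κ → n → 𝕜) :
    RCLike.re (rankOneSum c f * rankOneSum e g).trace
      = ∑ a, ∑ b, c a * e b * ‖⟪toLp 2 (f a), toLp 2 (g b)⟫_𝕜‖ ^ 2 := by
  simp only [rankOneSum, Matrix.sum_mul, Matrix.smul_mul, Matrix.mul_smul,
    trace_sum, trace_smul, trace_vecMulVec_star_mul_vecMulVec_star, smul_eq_mul,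
    Finset.mul_sum, ← RCLike.ofReal_mul, map_sum, RCLike.ofReal_re]
  rw [Finset.sum_comm]
  exact Finset.sum_congr rfl fun a _ => Finset.sum_congr rfl fun b _ => by ring

end RankOneSum

lemma abs_sum_sum_mul_sub_sum_sum_mul_le {ι κ : Type*} [Fintype ι] [Fintype κ]
    {c : ι → ℝ} {e : κ → ℝ} {f g : ι → κ → ℝ} {K : ℝ} (hc : ∀ a, 0 ≤ c a) (he : ∀ b, 0 ≤ e b)
    (hfg : ∀ a b, |f a b - g a b| ≤ K) :
    |∑ a, ∑ b, c a * e b * f a b - ∑ a, ∑ b, c a * e b * g a b|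
      ≤ K * (∑ a, c a) * (∑ b, e b) := by
  calc |∑ a, ∑ b, c a * e b * f a b - ∑ a, ∑ b, c a * e b * g a b|
      = |∑ a, ∑ b, c a * e b * (f a b - g a b)| := by
        simp only [mul_sub, Finset.sum_sub_distrib]
    _ ≤ ∑ a, ∑ b, c a * e b * K := by
        refine (Finset.abs_sum_le_sum_abs _ _).trans <| Finset.sum_le_sum fun a _ =>
          (Finset.abs_sum_le_sum_abs _ _).trans <| Finset.sum_le_sum fun b _ => ?_
        rw [abs_mul, abs_of_nonneg (mul_nonneg (hc a) (he b))]
        exact mul_le_mul_of_nonneg_left (hfg a b) (mul_nonneg (hc a) (he b))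
    _ = (∑ a, c a) * (∑ b, e b) * K := by
        rw [Finset.sum_mul_sum, Finset.sum_mul]; simp only [Finset.sum_mul]
    _ = K * (∑ a, c a) * (∑ b, e b) := by ring

theorem jl_compression_of_psd_matrices_general
    (J D d : ℕ) (A : Matrix (Fin d) (Fin D) ℂ)
    (ε : ℝ) (hε1 : ε ≤ 1)
    (lam : Fin J → Fin D → ℝ) (hlam : ∀ i a, 0 ≤ lam i a)
    (ψ : Fin J → Fin D → (Fin D → ℂ))
    (hunit : ∀ i a, nrm (ψ i a) = 1)
    (M : Fin J → Matrix (Fin D) (Fin D) ℂ)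
    (hMdef : ∀ i, M i = ∑ a, (lam i a : ℂ) • Matrix.vecMulVec (ψ i a) (star (ψ i a)))
    (hJL : ∀ i a j b,
      JLprop A ε (ψ i a) ∧
      JLprop A ε (ψ i a + ψ j b) ∧ JLprop A ε (ψ i a - ψ j b) ∧
      JLprop A ε (ψ i a + Complex.I • ψ j b) ∧ JLprop A ε (ψ i a - Complex.I • ψ j b)) :
    ∀ i j,
      |((A * M i * Aᴴ) * (A * M j * Aᴴ)).trace.re - (M i * M j).trace.re| ≤
        192 * ε * (∑ a, lam i a) * (∑ b, lam j b) := by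
  intro i j
  have hM : ∀ k, M k = rankOneSum (lam k) (ψ k) := hMdef
  have hpair : ∀ a b, |‖⟪toLp 2 (A *ᵥ ψ i a), toLp 2 (A *ᵥ ψ j b)⟫_ℂ‖ ^ 2
      - ‖⟪toLp 2 (ψ i a), toLp 2 (ψ j b)⟫_ℂ‖ ^ 2| ≤ 192 * ε := fun a b => by
    obtain ⟨-, hadd, hsub, hIadd, hIsub⟩ := hJL i a j b
    exact abs_norm_inner_mulVec_sq_sub_le_of_JLprop hε1 (hunit i a) (hunit j b)
      hadd hsub hIadd hIsub
  rw [hM i, hM j, mul_rankOneSum_mul_conjTranspose, mul_rankOneSum_mul_conjTranspose]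
  simp only [← RCLike.re_to_complex, re_trace_rankOneSum_mul_rankOneSum]
  exact abs_sum_sum_mul_sub_sum_sum_mul_le (hlam i) (hlam j) hpair

/-- If `A` is an ε-JL matrix for a common set of unit eigenvectors `ψ i a` of psd
matrices `M i = Σ_a λ i a |ψ i a⟩⟨ψ i a|` (including all sums/differences needed by the
polarization identity), then the compressions `M' i := A (M i) A†` satisfy
`|tr(M' i M' j) − tr(M i M j)| ≤ 192 ε ‖M i‖₁ ‖M j‖₁` where `‖M i‖₁ = Σ_a λ i a`. -/
theorem jl_compression_of_psd_matrices
    (J D d : ℕ) (A : Matrix (Fin d) (Fin D) ℂ)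
    (ε : ℝ) (hε0 : 0 < ε) (hε1 : ε ≤ 1)
    (lam : Fin J → Fin D → ℝ) (hlam : ∀ i a, 0 ≤ lam i a)
    (ψ : Fin J → Fin D → (Fin D → ℂ))
    (hunit : ∀ i a, nrm (ψ i a) = 1)
    (M : Fin J → Matrix (Fin D) (Fin D) ℂ)
    (hMdef : ∀ i, M i = ∑ a, (lam i a : ℂ) • Matrix.vecMulVec (ψ i a) (star (ψ i a)))
    (hJL : ∀ i a j b,
      JLprop A ε (ψ i a) ∧
      JLprop A ε (ψ i a + ψ j b) ∧ JLprop A ε (ψ i a - ψ j b) ∧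
      JLprop A ε (ψ i a + Complex.I • ψ j b) ∧ JLprop A ε (ψ i a - Complex.I • ψ j b)) :
    ∀ i j,
      |((A * M i * Aᴴ) * (A * M j * Aᴴ)).trace.re - (M i * M j).trace.re| ≤
        192 * ε * (∑ a, lam i a) * (∑ b, lam j b) :=
  jl_compression_of_psd_matrices_general J D d A ε hε1 lam hlam ψ hunit M hMdef hJL
end
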